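/- Let f : R → A be a local homomorphism of commutative local rings with maximal ideals 𝔪_R and 𝔪, residue fields κ_R = R/𝔪_R and κ = A/𝔪. Let Ã = κ ⊗_R A, let M̃ be the kernel of the evaluation map Ã → κ, and let ϑ : 𝔪/𝔪² → M̃/M̃² be the κ-linear map induced by a ↦ 1⊗a. If ϑ is bijective, then the canonical κ-linear map Φ : Der_R(A, κ) → T^Zar, sending a derivation D to the map it induces on 𝔪/𝔪², is bijective. -/

import Mathlib

/-!
Base change along `R → κ` identifies `R`-derivations `D : A → κ` with the `κ`-linear forms
`D̃ = id ⊗ D` on `Ã` satisfying the Leibniz rule with respect to `ev`. Such a form vanishes on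
`M̃²`, and since `M̃` is spanned over `κ` by the elements `1 ⊗ a - a(x) ⊗ 1`, on which `D̃` takes
the value `D a`, restriction to `M̃` identifies `Der_R(A, κ)` with the dual of `M̃/M̃²`.
Dualizing the isomorphism `ϑ` gives `Der_R(A, κ) ≅ (𝔪/𝔪²)^∨`, and `T^Zar` is all of `(𝔪/𝔪²)^∨`
because `ϑ ∘ j = 0` (`1 ⊗ f(r) = (r • 1) ⊗ 1 = 0`) and `ϑ` is injective.
-/

open IsLocalRing TensorProduct

section RelTangent

variable (R A : Type*) [CommRing R] [CommRing A] [IsLocalRing R] [IsLocalRing A]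
  [Algebra R A] [IsLocalHom (algebraMap R A)]

/-- The image in `𝔪_A` of an element of `𝔪_R` under the local homomorphism `R → A`. -/
def mapMax (r : maximalIdeal R) : maximalIdeal A :=
  ⟨algebraMap R A r, by
    rw [IsLocalRing.mem_maximalIdeal, mem_nonunits_iff]
    exact fun h => mem_nonunits_iff.mp ((IsLocalRing.mem_maximalIdeal _).mp r.2)
      (IsLocalHom.map_nonunit _ h)⟩

/-- The class in `𝔪_A/𝔪_A²` of the image of an element of `𝔪_R`; the map
`j : 𝔪_R/𝔪_R² → 𝔪_A/𝔪_A²` induced by `R → A` sends the class of `r` to `jClass R A r`. -/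
noncomputable def jClass (r : maximalIdeal R) : (maximalIdeal A).Cotangent :=
  (maximalIdeal A).toCotangent (mapMax R A r)

/-- The Zariski relative tangent space: the space of `κ`-linear forms on `𝔪_A/𝔪_A²`
vanishing on the image of `j : 𝔪_R/𝔪_R² → 𝔪_A/𝔪_A²`. -/
noncomputable def TZar : Submodule (ResidueField A)
    ((maximalIdeal A).Cotangent →ₗ[ResidueField A] ResidueField A) :=
  ⨅ r : maximalIdeal R, LinearMap.ker (LinearMap.applyₗ (jClass R A r))

instance : IsScalarTower R A (ResidueField A) :=
  IsScalarTower.of_algebraMap_eq fun x =>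
    (IsLocalRing.ResidueField.map_residue (algebraMap R A) x).symm

/-- The evaluation map `Ã = κ ⊗_R A → κ`, `λ ⊗ a ↦ λ·a(x)`. -/
noncomputable def ev : (ResidueField A ⊗[R] A) →ₐ[ResidueField A] ResidueField A :=
  Algebra.TensorProduct.lift (AlgHom.id _ _) (IsScalarTower.toAlgHom R A (ResidueField A))
    fun _ _ => Commute.all _ _

/-- The ideal `M̃ = ker(ev) ⊆ Ã`. -/
noncomputable def Mker : Ideal (ResidueField A ⊗[R] A) := RingHom.ker (ev R A)

/-- For `m ∈ 𝔪`, the element `1 ⊗ m` of `M̃`. -/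
noncomputable def oneTmul (m : maximalIdeal A) : Mker R A :=
  ⟨(1 : ResidueField A) ⊗ₜ[R] (m : A), by
    simp only [Mker, RingHom.mem_ker, ev, Algebra.TensorProduct.lift_tmul, map_one, one_mul,
      AlgHom.coe_id, id_eq, IsScalarTower.coe_toAlgHom', ResidueField.algebraMap_eq]
    exact Ideal.Quotient.eq_zero_iff_mem.mpr m.2⟩

/-- For `a : A`, the element `1 ⊗ a − a(x) ⊗ 1` of `M̃`. -/
noncomputable def gen (a : A) : Mker R A :=
  ⟨(1 : ResidueField A) ⊗ₜ[R] a - residue A a ⊗ₜ[R] (1 : A), by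
    simp [Mker, RingHom.mem_ker, ev, Algebra.TensorProduct.lift_tmul]⟩

end RelTangent

lemma Ideal.Cotangent.linearMap_ext {K S M : Type*} [CommRing K] [CommRing S] [Algebra K S]
    {I : Ideal S} [AddCommGroup M] [Module K M] {f g : I.Cotangent →ₗ[K] M}
    (h : ∀ x, f (I.toCotangent x) = g (I.toCotangent x)) : f = g :=
  LinearMap.ext fun y => by
    obtain ⟨x, rfl⟩ := I.toCotangent_surjective y
    exact h x

section BaseChangeResidue

variable {R A : Type*} [CommRing R] [CommRing A] [IsLocalRing A] [Algebra R A]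

local notation "κ" => ResidueField A
local notation "Ã" => ResidueField A ⊗[R] A

noncomputable def Derivation.baseChangeResidue (D : Derivation R A κ) : Ã →ₗ[κ] κ :=
  LinearMap.liftBaseChange κ (D : A →ₗ[R] κ)

@[simp]
lemma Derivation.baseChangeResidue_tmul (D : Derivation R A κ) (c : κ) (a : A) :
    D.baseChangeResidue (c ⊗ₜ[R] a) = c * D a := rfl

@[simp]
lemma Derivation.baseChangeResidue_add (D D' : Derivation R A κ) :
    (D + D').baseChangeResidue = D.baseChangeResidue + D'.baseChangeResidue := by
  ext a
  simp

@[simp]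
lemma Derivation.baseChangeResidue_smul (c : κ) (D : Derivation R A κ) :
    (c • D).baseChangeResidue = c • D.baseChangeResidue := by
  ext a
  simp

end BaseChangeResidue

section DerivationsAsCotangentDual

variable (R A : Type*) [CommRing R] [CommRing A] [IsLocalRing R] [IsLocalRing A]
  [Algebra R A] [IsLocalHom (algebraMap R A)]

local notation "κ" => ResidueField A
local notation "Ã" => ResidueField A ⊗[R] A

lemma ev_tmul (c : κ) (a : A) : ev R A (c ⊗ₜ[R] a) = c * residue A a := by
  simp [ev, ResidueField.algebraMap_eq]

variable {R A}

lemma Derivation.baseChangeResidue_mul (D : Derivation R A κ) (z w : Ã) :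
    D.baseChangeResidue (z * w) =
      ev R A z * D.baseChangeResidue w + ev R A w * D.baseChangeResidue z := by
  induction z using TensorProduct.induction_on with
  | zero => simp
  | add z₁ z₂ h₁ h₂ => simp only [add_mul, map_add, h₁, h₂]; ring
  | tmul c a =>
    induction w using TensorProduct.induction_on with
    | zero => simp
    | add w₁ w₂ h₁ h₂ => simp only [mul_add, map_add, h₁, h₂]; ring
    | tmul d b =>
      simp only [Algebra.TensorProduct.tmul_mul_tmul, baseChangeResidue_tmul, ev_tmul,
        Derivation.leibniz, Algebra.smul_def, ResidueField.algebraMap_eq]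
      ring

lemma Derivation.baseChangeResidue_mul_eq_zero (D : Derivation R A κ) (z w : Mker R A) :
    D.baseChangeResidue (z * w) = 0 := by
  have hz : ev R A z = 0 := z.2
  have hw : ev R A w = 0 := w.2
  rw [baseChangeResidue_mul, hz, hw, zero_mul, zero_mul, add_zero]

noncomputable def Derivation.cotangentDual (D : Derivation R A κ) :
    Module.Dual κ (Mker R A).Cotangent :=
  Ideal.Cotangent.lift (D.baseChangeResidue ∘ₗ (Mker R A).subtype.restrictScalars κ)
    D.baseChangeResidue_mul_eq_zero

@[simp]
lemma Derivation.cotangentDual_toCotangent (D : Derivation R A κ) (z : Mker R A) :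
    D.cotangentDual ((Mker R A).toCotangent z) = D.baseChangeResidue z :=
  Ideal.Cotangent.lift_toCotangent _ _ _

lemma coe_gen (a : A) : (gen R A a : Ã) = 1 ⊗ₜ[R] a - residue A a ⊗ₜ[R] 1 := rfl

@[simp]
lemma Derivation.baseChangeResidue_gen (D : Derivation R A κ) (a : A) :
    D.baseChangeResidue (gen R A a) = D a := by
  simp [coe_gen]

lemma gen_add (a b : A) : gen R A (a + b) = gen R A a + gen R A b := by
  ext
  simp only [coe_gen, Submodule.coe_add, map_add, tmul_add, add_tmul]
  abel

lemma gen_smul (r : R) (a : A) : gen R A (r • a) = r • gen R A a := by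
  ext
  have : residue A (r • a) = r • residue A a := by
    rw [Algebra.smul_def, Algebra.smul_def, map_mul, ← ResidueField.algebraMap_eq,
      ← IsScalarTower.algebraMap_apply]
  simp only [coe_gen, SetLike.val_smul_of_tower, this, smul_sub, smul_tmul', tmul_smul]

lemma gen_one : gen R A 1 = 0 := by
  ext
  simp [coe_gen]

/-- `gen (a * b) - a(x) • gen b - b(x) • gen a = gen a * gen b` lies in `M̃²`. -/
lemma toCotangent_gen_mul (a b : A) :
    (Mker R A).toCotangent (gen R A (a * b)) =
      residue A a • (Mker R A).toCotangent (gen R A b) +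
        residue A b • (Mker R A).toCotangent (gen R A a) := by
  rw [← LinearMap.map_smul_of_tower, ← LinearMap.map_smul_of_tower, ← map_add,
    Ideal.toCotangent_eq, pow_two]
  convert Ideal.mul_mem_mul (gen R A a).2 (gen R A b).2 using 1
  simp only [Submodule.coe_add, SetLike.val_smul_of_tower, coe_gen, map_mul, smul_sub,
    smul_tmul', smul_eq_mul, mul_one, sub_mul, mul_sub, Algebra.TensorProduct.tmul_mul_tmul,
    one_mul]
  rw [mul_comm (residue A b)]
  abel

noncomputable def derivationOfCotangentDual (ℓ : Module.Dual κ (Mker R A).Cotangent) :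
    Derivation R A κ where
  toFun a := ℓ ((Mker R A).toCotangent (gen R A a))
  map_add' a b := by simp only [gen_add, map_add]
  map_smul' r a := by simp only [gen_smul, LinearMap.map_smul_of_tower, RingHom.id_apply]
  map_one_eq_zero' := by simp only [LinearMap.coe_mk, AddHom.coe_mk, gen_one, map_zero]
  leibniz' a b := by
    simp only [LinearMap.coe_mk, AddHom.coe_mk, toCotangent_gen_mul, map_add, map_smul,
      smul_eq_mul, Algebra.smul_def, ResidueField.algebraMap_eq]

@[simp]
lemma derivationOfCotangentDual_apply (ℓ : Module.Dual κ (Mker R A).Cotangent) (a : A) :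
    derivationOfCotangentDual ℓ a = ℓ ((Mker R A).toCotangent (gen R A a)) := rfl

variable (R A) in
noncomputable def projMker : Ã →ₗ[κ] Mker R A :=
  LinearMap.codRestrict ((Mker R A).restrictScalars κ)
    (LinearMap.id - Algebra.linearMap κ Ã ∘ₗ (ev R A).toLinearMap) fun z => by
      simp [Mker, RingHom.mem_ker, -Algebra.TensorProduct.algebraMap_apply]

lemma coe_projMker (z : Ã) : (projMker R A z : Ã) = z - algebraMap κ Ã (ev R A z) := rfl

lemma projMker_coe (z : Mker R A) : projMker R A z = z := by
  have hz : ev R A z = 0 := z.2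
  ext
  rw [coe_projMker, hz, map_zero, sub_zero]

lemma projMker_tmul (c : κ) (a : A) : projMker R A (c ⊗ₜ[R] a) = c • gen R A a := by
  ext
  simp [coe_projMker, coe_gen, ev_tmul, smul_sub, smul_tmul',
    Algebra.TensorProduct.algebraMap_apply]

lemma baseChangeResidue_derivationOfCotangentDual (ℓ : Module.Dual κ (Mker R A).Cotangent) :
    (derivationOfCotangentDual ℓ).baseChangeResidue =
      ℓ ∘ₗ ((Mker R A).toCotangent.restrictScalars κ) ∘ₗ projMker R A := by
  ext a
  simp [projMker_tmul]

variable (R A) in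
noncomputable def derivationEquivCotangentDual :
    Derivation R A κ ≃ₗ[κ] Module.Dual κ (Mker R A).Cotangent where
  toFun D := D.cotangentDual
  invFun := derivationOfCotangentDual
  map_add' D D' := by
    refine Ideal.Cotangent.linearMap_ext fun z => ?_
    simp
  map_smul' c D := by
    refine Ideal.Cotangent.linearMap_ext fun z => ?_
    simp
  left_inv D := by
    ext a
    simp
  right_inv ℓ := by
    ext z
    obtain ⟨z, rfl⟩ := (Mker R A).toCotangent_surjective z
    simp [baseChangeResidue_derivationOfCotangentDual, projMker_coe]

@[simp]
lemma derivationEquivCotangentDual_apply (D : Derivation R A κ) :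
    derivationEquivCotangentDual R A D = D.cotangentDual := rfl

end DerivationsAsCotangentDual

section ZariskiTangent

variable {R A : Type*} [CommRing R] [CommRing A] [IsLocalRing R] [IsLocalRing A]
  [Algebra R A] [IsLocalHom (algebraMap R A)]

lemma coe_oneTmul (m : maximalIdeal A) :
    (oneTmul R A m : ResidueField A ⊗[R] A) = 1 ⊗ₜ[R] (m : A) := rfl

/-- `1 ⊗ f(r) = r • (1 ⊗ 1) = (r • 1) ⊗ 1`, and `r` acts by zero on `κ`. -/
lemma oneTmul_mapMax (r : maximalIdeal R) : oneTmul R A (mapMax R A r) = 0 := by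
  have hr : (r : R) • (1 : ResidueField A) = 0 := by
    rw [Algebra.smul_def, mul_one, IsScalarTower.algebraMap_apply R A, ResidueField.algebraMap_eq,
      residue_eq_zero_iff]
    exact (mapMax R A r).2
  ext
  change 1 ⊗ₜ[R] algebraMap R A r = 0
  rw [Algebra.algebraMap_eq_smul_one, tmul_smul, smul_tmul', hr, zero_tmul]

lemma TZar_eq_top_of_injective
    {ϑ : (maximalIdeal A).Cotangent →ₗ[ResidueField A] (Mker R A).Cotangent}
    (hϑ : ∀ m : maximalIdeal A,
      ϑ ((maximalIdeal A).toCotangent m) = (Mker R A).toCotangent (oneTmul R A m))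
    (hinj : Function.Injective ϑ) : TZar R A = ⊤ := by
  have hj (r : maximalIdeal R) : jClass R A r = 0 :=
    hinj (by rw [jClass, hϑ, oneTmul_mapMax, map_zero, map_zero])
  refine eq_top_iff.2 fun g _ => Submodule.mem_iInf _ |>.2 fun r => ?_
  simp [hj]

end ZariskiTangent

/-- Let `f : R → A` be a local homomorphism of commutative local rings with
residue field `κ`, `Ã = κ ⊗_R A`, `M̃` the kernel of the evaluation map `Ã → κ`, and let
`ϑ : 𝔪/𝔪² → M̃/M̃²` be the `κ`-linear map induced by `a ↦ 1 ⊗ a`.  If `ϑ` is bijective, then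
the canonical `κ`-linear map `Φ : Der_R(A, κ) → T^Zar`, sending a derivation `D` to the map it
induces on `𝔪/𝔪²`, is bijective. -/
theorem stmt_8 (R A : Type*) [CommRing R] [CommRing A] [IsLocalRing R] [IsLocalRing A]
    [Algebra R A] [IsLocalHom (algebraMap R A)]
    (ϑ : (maximalIdeal A).Cotangent →ₗ[ResidueField A] (Mker R A).Cotangent)
    (hϑ : ∀ m : maximalIdeal A,
      ϑ ((maximalIdeal A).toCotangent m) = (Mker R A).toCotangent (oneTmul R A m))
    (hbij : Function.Bijective ϑ) :
    ∃ Φ : Derivation R A (ResidueField A) →ₗ[ResidueField A] TZar R A,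
      (∀ (D : Derivation R A (ResidueField A)) (m : maximalIdeal A),
        ((Φ D : (maximalIdeal A).Cotangent →ₗ[ResidueField A] ResidueField A))
          ((maximalIdeal A).toCotangent m) = D m) ∧
      Function.Bijective Φ := by
  let Φ := derivationEquivCotangentDual R A ≪≫ₗ (LinearEquiv.ofBijective ϑ hbij).dualMap ≪≫ₗ
    (LinearEquiv.ofTop _ (TZar_eq_top_of_injective hϑ hbij.1)).symm
  refine ⟨Φ.toLinearMap, fun D m => ?_, Φ.bijective⟩
  simp [Φ, hϑ, coe_oneTmul]
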